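/- arXiv:2402.06301 — 3 statements merged into one kernel-verified Lean document; each statement's English description precedes it below -/
import Mathlib

section
/- Convergence of the Helmholtz filter: let y ∈ H²(0,L) ∩ H¹₀(0,L) be fixed, and for α > 0 let z_α ∈ H²(0,L) ∩ H¹₀(0,L) solve z_α - α² (z_α)_xx = y_α, where y_α ∈ L²(0,L). Then ∫₀^L |(z_α - y)_x|² dx ≤ ∫₀^L |(y_α - y)_x|² dx + α² ‖y_xx‖²_{L²}, provided y_α ∈ H¹₀(0,L). In particular, if y_α → y strongly in H¹₀(0,L) as α → 0⁺, then z_α → y strongly in H¹₀(0,L). -/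
open Set Filter Topology MeasureTheory intervalIntegral

/-! With `e = z - y` and `f = w - y` the filter equation reads `e - α² e'' = f + α² y''`.
Testing it against `-e''` and integrating by parts (`e` and `f` vanish at the endpoints) gives
`∫ e'² + α² ∫ e''² = ∫ f' e' - α² ∫ y'' e''`, and Young's inequality on the right absorbs the
`e'` and `e''` terms into the left. -/

theorem integral_mul_deriv_deriv_eq_neg_of_eq_zero {a b : ℝ} {u v : ℝ → ℝ}
    (hu : ContDiff ℝ 1 u) (hv : ContDiff ℝ 2 v) (ha : u a = 0) (hb : u b = 0) :
    ∫ x in a..b, u x * deriv (deriv v) x = -∫ x in a..b, deriv u x * deriv v x := by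
  have hv' : ContDiff ℝ 1 (deriv v) := hv.deriv'
  rw [integral_mul_deriv_eq_deriv_mul
    (fun x _ => (hu.differentiable one_ne_zero x).hasDerivAt)
    (fun x _ => (hv'.differentiable one_ne_zero x).hasDerivAt)
    ((hu.continuous_deriv le_rfl).intervalIntegrable _ _)
    ((hv'.continuous_deriv le_rfl).intervalIntegrable _ _), ha, hb]
  ring

section Helmholtz

variable {a b α : ℝ} {e f g : ℝ → ℝ}

theorem helmholtz_energy_identity (hab : a ≤ b) (he : ContDiff ℝ 2 e) (hf : ContDiff ℝ 1 f)
    (hg : Continuous g) (he_bc : e a = 0 ∧ e b = 0) (hf_bc : f a = 0 ∧ f b = 0)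
    (heq : ∀ x ∈ Ioo a b, e x - α ^ 2 * deriv (deriv e) x = f x + α ^ 2 * g x) :
    ∫ x in a..b, (deriv e x ^ 2 + α ^ 2 * deriv (deriv e) x ^ 2)
      = ∫ x in a..b, (deriv f x * deriv e x - α ^ 2 * (g x * deriv (deriv e) x)) := by
  have he₁ : ContDiff ℝ 1 e := he.of_le one_le_two
  have ce' : Continuous (deriv e) := he.continuous_deriv one_le_two
  have ce'' : Continuous (deriv (deriv e)) := he.deriv'.continuous_deriv le_rfl
  have cf' : Continuous (deriv f) := hf.continuous_deriv le_rfl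
  have hii {h : ℝ → ℝ} (hh : Continuous h) : IntervalIntegrable h volume a b :=
    hh.intervalIntegrable a b
  have hde (x : ℝ) : deriv (e - f) x = deriv e x - deriv f x :=
    deriv_sub (he₁.differentiable one_ne_zero x) (hf.differentiable one_ne_zero x)
  have htest : ∫ x in a..b, (e - f) x * deriv (deriv e) x
      = ∫ x in a..b, α ^ 2 * (deriv (deriv e) x ^ 2 + g x * deriv (deriv e) x) := by
    simp only [integral_of_le hab, integral_Ioc_eq_integral_Ioo]
    refine setIntegral_congr_fun measurableSet_Ioo fun x hx => ?_
    simp only [Pi.sub_apply]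
    linear_combination deriv (deriv e) x * heq x hx
  rw [integral_mul_deriv_deriv_eq_neg_of_eq_zero (u := e - f) (he₁.sub hf) he
    (by simp [he_bc.1, hf_bc.1]) (by simp [he_bc.2, hf_bc.2])] at htest
  simp only [hde] at htest
  rw [← sub_eq_zero, ← intervalIntegral.integral_sub (hii (by fun_prop)) (hii (by fun_prop))]
  calc _ = ∫ x in a..b, ((deriv e x - deriv f x) * deriv e x
          + α ^ 2 * (deriv (deriv e) x ^ 2 + g x * deriv (deriv e) x)) := by
        congr 1; ext x; ring
    _ = 0 := by
        rw [intervalIntegral.integral_add (hii (by fun_prop)) (hii (by fun_prop)), ← htest]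
        ring

theorem helmholtz_energy_le (hab : a ≤ b) (he : ContDiff ℝ 2 e) (hf : ContDiff ℝ 1 f)
    (hg : Continuous g) (he_bc : e a = 0 ∧ e b = 0) (hf_bc : f a = 0 ∧ f b = 0)
    (heq : ∀ x ∈ Ioo a b, e x - α ^ 2 * deriv (deriv e) x = f x + α ^ 2 * g x) :
    ∫ x in a..b, deriv e x ^ 2 ≤ (∫ x in a..b, deriv f x ^ 2) + α ^ 2 * ∫ x in a..b, g x ^ 2 := by
  have ce' : Continuous (deriv e) := he.continuous_deriv one_le_two
  have ce'' : Continuous (deriv (deriv e)) := he.deriv'.continuous_deriv le_rfl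
  have cf' : Continuous (deriv f) := hf.continuous_deriv le_rfl
  have hii {h : ℝ → ℝ} (hh : Continuous h) : IntervalIntegrable h volume a b :=
    hh.intervalIntegrable a b
  set I := ∫ x in a..b, (deriv e x ^ 2 + α ^ 2 * deriv (deriv e) x ^ 2)
  set F := ∫ x in a..b, (deriv f x ^ 2 + α ^ 2 * g x ^ 2) with hF_def
  have hI : I ≤ (F + I) / 2 := calc
    I = ∫ x in a..b, (deriv f x * deriv e x - α ^ 2 * (g x * deriv (deriv e) x)) :=
        helmholtz_energy_identity hab he hf hg he_bc hf_bc heq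
    _ ≤ ∫ x in a..b, ((deriv f x ^ 2 + α ^ 2 * g x ^ 2)
          + (deriv e x ^ 2 + α ^ 2 * deriv (deriv e) x ^ 2)) / 2 := by
        refine integral_mono_on hab (hii (by fun_prop)) (hii (by fun_prop)) fun x _ => ?_
        nlinarith [sq_nonneg (deriv f x - deriv e x),
          mul_nonneg (sq_nonneg α) (sq_nonneg (g x + deriv (deriv e) x))]
    _ = (F + I) / 2 := by
        rw [intervalIntegral.integral_div,
          intervalIntegral.integral_add (hii (by fun_prop)) (hii (by fun_prop))]
  have hle : ∫ x in a..b, deriv e x ^ 2 ≤ I :=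
    integral_mono_on hab (hii (by fun_prop)) (hii (by fun_prop)) fun x _ =>
      le_add_of_nonneg_right (by positivity)
  have hF : F = (∫ x in a..b, deriv f x ^ 2) + α ^ 2 * ∫ x in a..b, g x ^ 2 := by
    rw [hF_def, intervalIntegral.integral_add (hii (by fun_prop)) (hii (by fun_prop)),
      intervalIntegral.integral_const_mul]
  linarith

theorem integral_sq_deriv_sub_le_of_helmholtz {y z w : ℝ → ℝ} (hab : a ≤ b)
    (hy : ContDiff ℝ 2 y) (hz : ContDiff ℝ 2 z) (hw : ContDiff ℝ 1 w)
    (hy_bc : y a = 0 ∧ y b = 0) (hz_bc : z a = 0 ∧ z b = 0) (hw_bc : w a = 0 ∧ w b = 0)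
    (heq : ∀ x ∈ Ioo a b, z x - α ^ 2 * deriv (deriv z) x = w x) :
    ∫ x in a..b, (deriv z x - deriv y x) ^ 2
      ≤ (∫ x in a..b, (deriv w x - deriv y x) ^ 2)
        + α ^ 2 * ∫ x in a..b, deriv (deriv y) x ^ 2 := by
  have hd : deriv (z - y) = deriv z - deriv y := funext fun x =>
    deriv_sub (hz.differentiable two_ne_zero x) (hy.differentiable two_ne_zero x)
  have hdd : deriv (deriv (z - y)) = deriv (deriv z) - deriv (deriv y) := funext fun x => by
    rw [hd]
    exact deriv_sub (hz.deriv'.differentiable one_ne_zero x) (hy.deriv'.differentiable one_ne_zero x)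
  have hdw : deriv (w - y) = deriv w - deriv y := funext fun x =>
    deriv_sub (hw.differentiable one_ne_zero x) (hy.differentiable two_ne_zero x)
  have key := helmholtz_energy_le (e := z - y) (f := w - y) (g := deriv (deriv y)) hab
    (hz.sub hy) (hw.sub (hy.of_le one_le_two)) (hy.deriv'.continuous_deriv le_rfl)
    (by simp [hz_bc, hy_bc]) (by simp [hw_bc, hy_bc])
    (fun x hx => by simp only [hdd, Pi.sub_apply]; linear_combination heq x hx)
  simpa only [hd, hdw, Pi.sub_apply] using key

end Helmholtz

/-- Convergence of the Helmholtz filter: if z_α - α²(z_α)_xx = y_α with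
Dirichlet conditions, then
∫ |(z_α - y)_x|² ≤ ∫ |(y_α - y)_x|² + α²‖y_xx‖₂², and in particular
y_α → y in H¹₀ implies z_α → y in H¹₀ as α → 0⁺. -/
theorem helmholtz_filter_convergence (L : ℝ) (hL : 0 < L)
    (y : ℝ → ℝ) (hy : ContDiff ℝ 2 y) (hy0 : y 0 = 0) (hyL : y L = 0)
    (zα yα : ℝ → ℝ → ℝ)
    (hz_reg : ∀ α > (0:ℝ), ContDiff ℝ 2 (zα α))
    (hyα_reg : ∀ α > (0:ℝ), ContDiff ℝ 1 (yα α))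
    (heq : ∀ α > (0:ℝ), ∀ x ∈ Ioo 0 L,
      zα α x - α ^ 2 * deriv (deriv (zα α)) x = yα α x)
    (hz_bc : ∀ α > (0:ℝ), zα α 0 = 0 ∧ zα α L = 0)
    (hyα_bc : ∀ α > (0:ℝ), yα α 0 = 0 ∧ yα α L = 0) :
    (∀ α > (0:ℝ),
      (∫ x in (0:ℝ)..L, (deriv (zα α) x - deriv y x) ^ 2)
        ≤ (∫ x in (0:ℝ)..L, (deriv (yα α) x - deriv y x) ^ 2)
          + α ^ 2 * (∫ x in (0:ℝ)..L, (deriv (deriv y) x) ^ 2))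
    ∧ (Tendsto (fun α => ∫ x in (0:ℝ)..L, (deriv (yα α) x - deriv y x) ^ 2)
          (𝓝[>] 0) (𝓝 0) →
       Tendsto (fun α => ∫ x in (0:ℝ)..L, (deriv (zα α) x - deriv y x) ^ 2)
          (𝓝[>] 0) (𝓝 0)) := by
  have hest : ∀ α > (0:ℝ), _ := fun α hα =>
    integral_sq_deriv_sub_le_of_helmholtz hL.le hy (hz_reg α hα) (hyα_reg α hα) ⟨hy0, hyL⟩
      (hz_bc α hα) (hyα_bc α hα) (heq α hα)
  refine ⟨hest, fun hlim => ?_⟩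
  have hbias : Tendsto (fun α : ℝ => α ^ 2 * ∫ x in (0:ℝ)..L, deriv (deriv y) x ^ 2)
      (𝓝[>] 0) (𝓝 0) := by
    have hcont : Continuous fun α : ℝ => α ^ 2 * ∫ x in (0:ℝ)..L, deriv (deriv y) x ^ 2 := by
      fun_prop
    simpa using (hcont.tendsto 0).mono_left nhdsWithin_le_nhds
  refine squeeze_zero' (Eventually.of_forall fun α => ?_)
    (eventually_nhdsWithin_of_forall hest) (by simpa using hlim.add hbias)
  exact intervalIntegral.integral_nonneg hL.le fun x _ => sq_nonneg _
end

section
/- Under the hypotheses of the decay estimate (‖y₀‖_∞ < π/L, r = ½((π/L)²-‖y₀‖²_∞)), the weighted dissipation integral satisfies ∫₀^t e^{rσ}‖y_x(·,σ)‖₂² dσ ≤ (2 + ‖y₀‖²_∞/r)‖y₀‖₂² for all t ≥ 0. -/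
/-!
With `c = m²`, the functional
`F t = ∫₀ᵗ e^{rσ} D σ dσ + e^{rt} E t + (c + r)/r · E 0 · e^{-rt}`
is nonincreasing on `[0, ∞)`: the energy inequality bounds its derivative by
`(c + r) (e^{rt} E t - E 0 e^{-rt})`, which the decay estimate makes nonpositive.
Since the last two terms of `F` are nonnegative, the weighted integral is at most
`F 0 = (2 + c/r) E 0`.
-/

open Set Real intervalIntegral

noncomputable def weightedDissipationLyapunov (r c : ℝ) (E D : ℝ → ℝ) (t : ℝ) : ℝ :=
  (∫ σ in (0:ℝ)..t, exp (r * σ) * D σ) + exp (r * t) * E t + (c + r) / r * E 0 * exp (-(r * t))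

section

variable {r c : ℝ} {E E' D : ℝ → ℝ}

lemma weightedDissipationLyapunov_zero (hr : r ≠ 0) :
    weightedDissipationLyapunov r c E D 0 = (2 + c / r) * E 0 := by
  simp only [weightedDissipationLyapunov, integral_same, mul_zero, neg_zero, exp_zero]
  field_simp
  ring

lemma integral_exp_mul_le_weightedDissipationLyapunov (hr : 0 < r) (hc : 0 ≤ c + r)
    (hE0 : 0 ≤ E 0) {t : ℝ} (hEt : 0 ≤ E t) :
    ∫ σ in (0:ℝ)..t, exp (r * σ) * D σ ≤ weightedDissipationLyapunov r c E D t := by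
  unfold weightedDissipationLyapunov
  have : 0 ≤ exp (r * t) * E t := by positivity
  have : 0 ≤ (c + r) / r * E 0 * exp (-(r * t)) := by positivity
  linarith

lemma hasDerivAt_weightedDissipationLyapunov (hr : r ≠ 0) {t : ℝ}
    (hE : HasDerivAt E (E' t) t) (hD : Continuous D) :
    HasDerivAt (weightedDissipationLyapunov r c E D)
      (exp (r * t) * D t + exp (r * t) * (r * E t + E' t) - (c + r) * E 0 * exp (-(r * t))) t := by
  have hInt : HasDerivAt (fun u => ∫ σ in (0:ℝ)..u, exp (r * σ) * D σ) (exp (r * t) * D t) t :=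
    ((continuous_const.mul continuous_id).rexp.mul hD).integral_hasStrictDerivAt 0 t
      |>.hasDerivAt
  have hGrowth : HasDerivAt (fun u => exp (r * u)) (exp (r * t) * r) t := by
    simpa using ((hasDerivAt_id t).const_mul r).exp
  have hDecay : HasDerivAt (fun u => exp (-(r * u))) (exp (-(r * t)) * -r) t := by
    simpa using ((hasDerivAt_id t).const_mul r).neg.exp
  refine ((hInt.add (hGrowth.mul hE)).add (hDecay.const_mul ((c + r) / r * E 0))).congr_deriv ?_
  field_simp
  ring

lemma exp_mul_le_of_le_exp_neg_two_mul {t x y : ℝ} (h : x ≤ y * exp (-2 * r * t)) :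
    exp (r * t) * x ≤ y * exp (-(r * t)) :=
  calc exp (r * t) * x ≤ exp (r * t) * (y * exp (-2 * r * t)) := by gcongr
    _ = y * exp (-(r * t)) := by rw [mul_left_comm, ← exp_add]; ring_nf

lemma weightedDissipationLyapunov_deriv_nonpos (hc : 0 ≤ c + r) {t : ℝ}
    (henergy : E' t + D t ≤ c * E t) (hdecay : E t ≤ E 0 * exp (-2 * r * t)) :
    exp (r * t) * D t + exp (r * t) * (r * E t + E' t) - (c + r) * E 0 * exp (-(r * t)) ≤ 0 := by
  have hEnergy : exp (r * t) * (E' t + D t) ≤ exp (r * t) * (c * E t) := by gcongr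
  have hDecay : (c + r) * (exp (r * t) * E t) ≤ (c + r) * (E 0 * exp (-(r * t))) :=
    mul_le_mul_of_nonneg_left (exp_mul_le_of_le_exp_neg_two_mul hdecay) hc
  nlinarith

lemma antitoneOn_weightedDissipationLyapunov (hr : 0 < r) (hc : 0 ≤ c + r)
    (hderiv : ∀ t ≥ (0:ℝ), HasDerivAt E (E' t) t) (hD : Continuous D)
    (henergy : ∀ t ≥ (0:ℝ), E' t + D t ≤ c * E t)
    (hdecay : ∀ t ≥ (0:ℝ), E t ≤ E 0 * exp (-2 * r * t)) :
    AntitoneOn (weightedDissipationLyapunov r c E D) (Ici 0) := by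
  have hF (t : ℝ) (ht : 0 ≤ t) : HasDerivAt (weightedDissipationLyapunov r c E D)
      (exp (r * t) * D t + exp (r * t) * (r * E t + E' t) - (c + r) * E 0 * exp (-(r * t))) t :=
    hasDerivAt_weightedDissipationLyapunov hr.ne' (hderiv t ht) hD
  refine antitoneOn_of_hasDerivWithinAt_nonpos (convex_Ici 0)
    (fun t ht => (hF t ht).continuousAt.continuousWithinAt)
    (fun t ht => (hF t (interior_subset ht)).hasDerivWithinAt) fun t ht => ?_
  have ht : 0 ≤ t := interior_subset ht
  exact weightedDissipationLyapunov_deriv_nonpos hc (henergy t ht) (hdecay t ht)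

theorem integral_exp_mul_dissipation_le (hr : 0 < r) (hc : 0 ≤ c + r)
    (hderiv : ∀ t ≥ (0:ℝ), HasDerivAt E (E' t) t) (hD : Continuous D)
    (hE : ∀ t ≥ (0:ℝ), 0 ≤ E t)
    (henergy : ∀ t ≥ (0:ℝ), E' t + D t ≤ c * E t)
    (hdecay : ∀ t ≥ (0:ℝ), E t ≤ E 0 * exp (-2 * r * t)) {t : ℝ} (ht : 0 ≤ t) :
    ∫ σ in (0:ℝ)..t, exp (r * σ) * D σ ≤ (2 + c / r) * E 0 :=
  calc ∫ σ in (0:ℝ)..t, exp (r * σ) * D σ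
      ≤ weightedDissipationLyapunov r c E D t :=
        integral_exp_mul_le_weightedDissipationLyapunov hr hc (hE 0 le_rfl) (hE t ht)
    _ ≤ weightedDissipationLyapunov r c E D 0 :=
        antitoneOn_weightedDissipationLyapunov hr hc hderiv hD henergy hdecay
          self_mem_Ici ht ht
    _ = (2 + c / r) * E 0 := weightedDissipationLyapunov_zero hr.ne'

end

theorem burgers_alpha_weighted_dissipation_general (L m r : ℝ) (E D E' : ℝ → ℝ)
    (hm : 0 ≤ m) (hmL : m < π / L)
    (hr : r = ((π / L) ^ 2 - m ^ 2) / 2)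
    (hderiv : ∀ t ≥ (0:ℝ), HasDerivAt E (E' t) t)
    (hDcont : Continuous D)
    (hEnonneg : ∀ t ≥ (0:ℝ), 0 ≤ E t)
    (henergy : ∀ t ≥ (0:ℝ), E' t + D t ≤ m ^ 2 * E t)
    (hdecay : ∀ t ≥ (0:ℝ), E t ≤ E 0 * exp (-2 * r * t)) :
    ∀ t ≥ (0:ℝ), (∫ σ in (0:ℝ)..t, exp (r * σ) * D σ) ≤ (2 + m ^ 2 / r) * E 0 := by
  have hrpos : 0 < r := by
    have : m ^ 2 < (π / L) ^ 2 := pow_lt_pow_left₀ hmL hm two_ne_zero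
    rw [hr]
    linarith
  intro t ht
  exact integral_exp_mul_dissipation_le hrpos (by positivity) hderiv hDcont hEnonneg henergy
    hdecay ht

/-- Weighted dissipation bound: under the decay hypotheses
(E' + D ≤ m² E, Poincaré, E(t) ≤ E(0)e^{-2rt}, r = ½((π/L)² - m²) > 0),
one has ∫₀^t e^{rσ} D(σ) dσ ≤ (2 + m²/r) E(0) for all t ≥ 0. -/
theorem burgers_alpha_weighted_dissipation (L m r : ℝ) (E D E' : ℝ → ℝ)
    (hL : 0 < L) (hm : 0 ≤ m) (hmL : m < π / L)
    (hr : r = ((π / L) ^ 2 - m ^ 2) / 2)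
    (hderiv : ∀ t ≥ (0:ℝ), HasDerivAt E (E' t) t)
    (hE'cont : Continuous E') (hDcont : Continuous D)
    (hEnonneg : ∀ t ≥ (0:ℝ), 0 ≤ E t)
    (hDnonneg : ∀ t ≥ (0:ℝ), 0 ≤ D t)
    (henergy : ∀ t ≥ (0:ℝ), E' t + D t ≤ m ^ 2 * E t)
    (hpoincare : ∀ t ≥ (0:ℝ), (π / L) ^ 2 * E t ≤ D t)
    (hdecay : ∀ t ≥ (0:ℝ), E t ≤ E 0 * exp (-2 * r * t)) :
    ∀ t ≥ (0:ℝ), (∫ σ in (0:ℝ)..t, exp (r * σ) * D σ) ≤ (2 + m ^ 2 / r) * E 0 :=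
  burgers_alpha_weighted_dissipation_general L m r E D E' hm hmL hr hderiv hDcont hEnonneg henergy
    hdecay
end

section
/- H¹-decay: assume d/dt ‖y_x(·,t)‖₂² ≤ ‖y₀‖²_∞ ‖y_x(·,t)‖₂² and ∫₀^t e^{rσ}‖y_x(·,σ)‖₂² dσ ≤ (2 + ‖y₀‖²_∞/r)‖y₀‖₂² for all t, with r = ½((π/L)² - ‖y₀‖²_∞) > 0. Then ‖y_x(·,t)‖₂² ≤ [(r + ‖y₀‖²_∞)(2 + ‖y₀‖²_∞/r)‖y₀‖₂² + ‖y₀‖²_{H¹₀}] e^{-rt} for all t ≥ 0. -/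
open Set Real intervalIntegral

/-! The weighted energy `F(u) = e^{ru} g(u) - (r + m²) ∫₀^u e^{rσ} g(σ) dσ` has
`F' = e^{ru} (g' - m² g) ≤ 0`, so `F(t) ≤ F(0) = g(0)`. Hence
`e^{rt} g(t) ≤ g(0) + (r + m²) ∫₀^t e^{rσ} g(σ) dσ`, and the dissipation bound on the integral
finishes the proof, since `r + m² = ((π/L)² + m²)/2 ≥ 0`. -/

section WeightedEnergy

variable {g g' : ℝ → ℝ} {a r : ℝ}

lemma hasDerivAt_exp_mul_sub_integral (hg : Continuous g) {s : ℝ} (hs : HasDerivAt g (g' s) s) :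
    HasDerivAt (fun u => exp (r * u) * g u - (r + a) * ∫ σ in (0:ℝ)..u, exp (r * σ) * g σ)
      (exp (r * s) * (g' s - a * g s)) s := by
  have hexp : HasDerivAt (fun u => exp (r * u)) (exp (r * s) * r) s :=
    ((hasDerivAt_id' s).const_mul r).exp.congr_deriv (by ring)
  have hint : HasDerivAt (fun u => ∫ σ in (0:ℝ)..u, exp (r * σ) * g σ) (exp (r * s) * g s) s :=
    ((continuous_exp.comp (continuous_const.mul continuous_id)).mul hg
      |>.integral_hasStrictDerivAt 0 s).hasDerivAt
  exact ((hexp.mul hs).sub (hint.const_mul (r + a))).congr_deriv (by ring)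

lemma antitoneOn_exp_mul_sub_integral (hg : Continuous g)
    (hderiv : ∀ t ≥ (0:ℝ), HasDerivAt g (g' t) t) (hineq : ∀ t ≥ (0:ℝ), g' t ≤ a * g t) :
    AntitoneOn (fun u => exp (r * u) * g u - (r + a) * ∫ σ in (0:ℝ)..u, exp (r * σ) * g σ)
      (Ici 0) := by
  have hF : ∀ s ∈ Ici (0:ℝ), HasDerivAt _ _ s :=
    fun s hs => hasDerivAt_exp_mul_sub_integral (r := r) (a := a) hg (hderiv s hs)
  refine antitoneOn_of_hasDerivWithinAt_nonpos (convex_Ici 0)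
    (fun s hs => (hF s hs).continuousAt.continuousWithinAt)
    (fun s hs => (hF s (interior_subset hs)).hasDerivWithinAt) fun s hs => ?_
  have hs : (0:ℝ) ≤ s := interior_subset (s := Ici (0:ℝ)) hs
  exact mul_nonpos_of_nonneg_of_nonpos (exp_pos _).le (sub_nonpos.mpr (hineq s hs))

lemma exp_mul_le_add_mul_integral (hg : Continuous g)
    (hderiv : ∀ t ≥ (0:ℝ), HasDerivAt g (g' t) t) (hineq : ∀ t ≥ (0:ℝ), g' t ≤ a * g t)
    {t : ℝ} (ht : 0 ≤ t) :
    exp (r * t) * g t ≤ g 0 + (r + a) * ∫ σ in (0:ℝ)..t, exp (r * σ) * g σ := by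
  have := antitoneOn_exp_mul_sub_integral (r := r) hg hderiv hineq self_mem_Ici ht ht
  simp only [mul_zero, exp_zero, one_mul, integral_same, sub_zero] at this
  linarith

end WeightedEnergy

theorem burgers_alpha_H1_decay_general (L m r E₀ : ℝ) (g g' : ℝ → ℝ)
    (hr : r = ((π / L) ^ 2 - m ^ 2) / 2)
    (hderiv : ∀ t ≥ (0:ℝ), HasDerivAt g (g' t) t)
    (hgcont : Continuous g)
    (hineq : ∀ t ≥ (0:ℝ), g' t ≤ m ^ 2 * g t)
    (hint : ∀ t ≥ (0:ℝ), (∫ σ in (0:ℝ)..t, exp (r * σ) * g σ) ≤ (2 + m ^ 2 / r) * E₀) :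
    ∀ t ≥ (0:ℝ), g t ≤ ((r + m ^ 2) * (2 + m ^ 2 / r) * E₀ + g 0) * exp (-r * t) := by
  intro t ht
  have hc : 0 ≤ r + m ^ 2 := by
    rw [hr, show ((π / L) ^ 2 - m ^ 2) / 2 + m ^ 2 = ((π / L) ^ 2 + m ^ 2) / 2 by ring]
    positivity
  have hweighted : exp (r * t) * g t ≤ (r + m ^ 2) * (2 + m ^ 2 / r) * E₀ + g 0 := by
    have := exp_mul_le_add_mul_integral (r := r) hgcont hderiv hineq ht
    linarith [mul_le_mul_of_nonneg_left (hint t ht) hc]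
  calc g t = exp (-r * t) * (exp (r * t) * g t) := by
        rw [← mul_assoc, ← exp_add, neg_mul, neg_add_cancel, exp_zero, one_mul]
    _ ≤ exp (-r * t) * ((r + m ^ 2) * (2 + m ^ 2 / r) * E₀ + g 0) := by gcongr
    _ = _ := mul_comm _ _

/-- H¹ decay: if g(t) = ‖y_x(·,t)‖₂² satisfies g' ≤ m² g and the weighted
dissipation bound ∫₀^t e^{rσ} g(σ) dσ ≤ (2 + m²/r)·E₀, with
r = ½((π/L)² - m²) > 0, then g(t) ≤ [(r + m²)(2 + m²/r)E₀ + g(0)] e^{-rt}. -/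
theorem burgers_alpha_H1_decay (L m r E₀ : ℝ) (g g' : ℝ → ℝ)
    (hL : 0 < L) (hm : 0 ≤ m) (hmL : m < π / L)
    (hr : r = ((π / L) ^ 2 - m ^ 2) / 2)
    (hE₀ : 0 ≤ E₀)
    (hderiv : ∀ t ≥ (0:ℝ), HasDerivAt g (g' t) t)
    (hgcont : Continuous g)
    (hgnonneg : ∀ t ≥ (0:ℝ), 0 ≤ g t)
    (hineq : ∀ t ≥ (0:ℝ), g' t ≤ m ^ 2 * g t)
    (hint : ∀ t ≥ (0:ℝ), (∫ σ in (0:ℝ)..t, exp (r * σ) * g σ) ≤ (2 + m ^ 2 / r) * E₀) :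
    ∀ t ≥ (0:ℝ), g t ≤ ((r + m ^ 2) * (2 + m ^ 2 / r) * E₀ + g 0) * exp (-r * t) :=
  burgers_alpha_H1_decay_general L m r E₀ g g' hr hderiv hgcont hineq hint
end
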